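/- arXiv:2002.02278 — 9 statements merged into one kernel-verified Lean document; each statement's English description precedes it below -/
import Mathlib

section
/- Let z : ℝ → ℝ³ be differentiable and ω : ℝ → ℝ³ be continuous, satisfying ż + ω × z − ω × e₃ − λ e₃ × z = 0 for all t ≥ 0 (where e₃ is the third standard basis vector and λ ∈ ℝ). Then the quantity z(t)·z(t) − 2 z(t)·e₃ is constant in time. -/
/-!
Since `e₃ × e₃ = 0`, the equation says `ż = (λ e₃ − ω) × (z − e₃)`, so `ż` is orthogonal to
`z − e₃`. Hence `|z − e₃|² = z·z − 2 z·e₃ + 1` has zero derivative and is constant.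
-/

open Matrix

/-- `e₃ = (0,0,1)`. -/
noncomputable def e3 : Fin 3 → ℝ := ![0, 0, 1]

section
variable {𝕜 ι : Type*} [NontriviallyNormedField 𝕜] [Fintype ι]

theorem HasDerivAt.dotProduct {f g : 𝕜 → ι → 𝕜} {f' g' : ι → 𝕜} {t : 𝕜}
    (hf : HasDerivAt f f' t) (hg : HasDerivAt g g' t) :
    HasDerivAt (fun s => f s ⬝ᵥ g s) (f' ⬝ᵥ g t + f t ⬝ᵥ g') t := by
  refine (HasDerivAt.fun_sum (u := Finset.univ) fun i _ =>
    (hasDerivAt_pi.1 hf i).fun_mul (hasDerivAt_pi.1 hg i)).congr_deriv ?_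
  exact Finset.sum_add_distrib

theorem HasDerivAt.dotProduct_self_sub_two_mul_dotProduct {z : 𝕜 → ι → 𝕜} {z' : ι → 𝕜} {t : 𝕜}
    (hz : HasDerivAt z z' t) (a : ι → 𝕜) :
    HasDerivAt (fun s => z s ⬝ᵥ z s - 2 * (z s ⬝ᵥ a)) (2 * ((z t - a) ⬝ᵥ z')) t := by
  refine ((hz.dotProduct hz).sub
    ((hz.dotProduct (hasDerivAt_const t a)).const_mul 2)).congr_deriv ?_
  rw [dotProduct_comm z', sub_dotProduct, dotProduct_comm z', dotProduct_zero]
  ring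

end

theorem eq_smul_sub_cross_sub {R : Type*} [CommRing R] {lam : R} {a w z d : Fin 3 → R}
    (h : d + w ⨯₃ z - w ⨯₃ a - lam • a ⨯₃ z = 0) :
    d = (lam • a - w) ⨯₃ (z - a) := by
  simp only [map_sub, map_smul, LinearMap.sub_apply, LinearMap.smul_apply, cross_self,
    smul_zero]
  linear_combination (norm := module) h

theorem stmt0_general (lam : ℝ) (z ω : ℝ → (Fin 3 → ℝ))
    (hz : Differentiable ℝ z)
    (heq : ∀ t : ℝ, 0 ≤ t →
      deriv z t + crossProduct (ω t) (z t) - crossProduct (ω t) e3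
        - lam • crossProduct e3 (z t) = 0) :
    ∀ t : ℝ, 0 ≤ t →
      z t ⬝ᵥ z t - 2 * (z t ⬝ᵥ e3) = z 0 ⬝ᵥ z 0 - 2 * (z 0 ⬝ᵥ e3) := by
  have hV s := (hz s).hasDerivAt.dotProduct_self_sub_two_mul_dotProduct e3
  have hV_zero : ∀ s, 0 ≤ s → HasDerivAt (fun s => z s ⬝ᵥ z s - 2 * (z s ⬝ᵥ e3)) 0 s := by
    intro s hs
    simpa only [eq_smul_sub_cross_sub (heq s hs), dot_cross_self, mul_zero] using hV s
  intro t ht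
  exact constant_of_has_deriv_right_zero
    (continuous_iff_continuousAt.2 fun s => (hV s).continuousAt).continuousOn
    (fun s hs => (hV_zero s hs.1).hasDerivWithinAt) t ⟨ht, le_rfl⟩

/-- If `ż + ω × z − ω × e₃ − λ e₃ × z = 0` for all `t ≥ 0`, then
`z·z − 2 z·e₃` is constant in time (for `t ≥ 0`). -/
theorem stmt0 (lam : ℝ) (z ω : ℝ → (Fin 3 → ℝ))
    (hz : Differentiable ℝ z) (hω : Continuous ω)
    (heq : ∀ t : ℝ, 0 ≤ t →
      deriv z t + crossProduct (ω t) (z t) - crossProduct (ω t) e3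
        - lam • crossProduct e3 (z t) = 0) :
    ∀ t : ℝ, 0 ≤ t →
      z t ⬝ᵥ z t - 2 * (z t ⬝ᵥ e3) = z 0 ⬝ᵥ z 0 - 2 * (z 0 ⬝ᵥ e3) :=
  stmt0_general lam z ω hz heq
end

section
/- Let X be a Banach space, A : D(A) ⊆ X → X a closed linear operator with compact inverse A⁻¹ : X → X, and B : X → X a linear operator with D(B) ⊇ D(A) such that ‖B u‖ ≤ c ‖u‖^{1−α} ‖A u‖^{α} for all u ∈ D(A), some α ∈ [0,1) and c > 0. Then B is A-compact, i.e., for every sequence (uₙ) in D(A) with both (uₙ) and (A uₙ) bounded, (B uₙ) has a convergent subsequence. -/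
/-!
Since `A⁻¹` is compact and `(A uₙ)` is bounded, `uₙ = A⁻¹ (A uₙ)` has a convergent, hence Cauchy,
subsequence. Applied to differences `uₙ - uₘ`, whose images under `A` stay bounded by `2M`, the
interpolation inequality makes `B` Hölder continuous of exponent `1 - α > 0` along this
subsequence, so `(B uₙ)` is Cauchy there as well and converges in the Banach space `X`.
-/

open Filter Topology Set Bornology

theorem IsCompactOperator.exists_tendsto_subseq {𝕜₁ 𝕜₂ : Type*} [NontriviallyNormedField 𝕜₁]
    [SeminormedRing 𝕜₂] {σ₁₂ : 𝕜₁ →+* 𝕜₂} {M₁ M₂ : Type*} [SeminormedAddCommGroup M₁]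
    [NormedSpace 𝕜₁ M₁] [TopologicalSpace M₂] [FirstCountableTopology M₂] [AddCommMonoid M₂]
    [Module 𝕜₂ M₂] [ContinuousConstSMul 𝕜₂ M₂] {f : M₁ →ₛₗ[σ₁₂] M₂}
    (hf : IsCompactOperator f) {x : ℕ → M₁} (hx : IsBounded (range x)) :
    ∃ a, ∃ φ : ℕ → ℕ, StrictMono φ ∧ Tendsto (f ∘ x ∘ φ) atTop (𝓝 a) := by
  obtain ⟨K, hK, hfK⟩ := hf.image_subset_compact_of_bounded hx
  obtain ⟨a, -, φ, hφ, h⟩ :=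
    hK.tendsto_subseq fun n => hfK (mem_image_of_mem f (mem_range_self n))
  exact ⟨a, φ, hφ, h⟩

theorem CauchySeq.of_dist_le_mul_rpow {α β : Type*} [PseudoMetricSpace α] [PseudoMetricSpace β]
    {x : ℕ → α} {y : ℕ → β} {C r : ℝ} (hx : CauchySeq x) (hr : 0 < r)
    (h : ∀ m n, dist (y m) (y n) ≤ C * dist (x m) (x n) ^ r) : CauchySeq y := by
  rw [cauchySeq_iff_tendsto_dist_atTop_0] at hx ⊢
  have hbound : Tendsto (fun t : ℝ => C * t ^ r) (𝓝 0) (𝓝 0) := by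
    simpa [Real.zero_rpow hr.ne'] using
      ((Real.continuousAt_rpow_const 0 r (Or.inr hr.le)).const_mul C).tendsto
  exact squeeze_zero (fun _ => dist_nonneg) (fun p => h p.1 p.2) (hbound.comp hx)

theorem dist_le_of_norm_le_mul_rpow_mul_rpow {X Y Z : Type*} [SeminormedAddCommGroup X]
    [Module ℝ X] [SeminormedAddCommGroup Y] [Module ℝ Y] [SeminormedAddCommGroup Z] [Module ℝ Z]
    {D : Submodule ℝ X} {A : D →ₗ[ℝ] Y} {B : X →ₗ[ℝ] Z} {α c : ℝ} (hα : 0 ≤ α) (hc : 0 ≤ c)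
    (hB : ∀ u : D, ‖B u‖ ≤ c * ‖(u : X)‖ ^ (1 - α) * ‖A u‖ ^ α)
    {u v : D} {R : ℝ} (hu : ‖A u‖ ≤ R) (hv : ‖A v‖ ≤ R) :
    dist (B u) (B v) ≤ c * (2 * R) ^ α * dist (u : X) v ^ (1 - α) := by
  have hA : ‖A (u - v)‖ ≤ 2 * R := by
    rw [map_sub]
    linarith [norm_sub_le (A u) (A v)]
  calc dist (B u) (B v) = ‖B ((u - v : D) : X)‖ := by
        rw [dist_eq_norm, Submodule.coe_sub, map_sub]
    _ ≤ c * ‖((u - v : D) : X)‖ ^ (1 - α) * ‖A (u - v)‖ ^ α := hB _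
    _ ≤ c * ‖((u - v : D) : X)‖ ^ (1 - α) * (2 * R) ^ α :=
        mul_le_mul_of_nonneg_left (Real.rpow_le_rpow (norm_nonneg _) hA hα)
          (mul_nonneg hc (Real.rpow_nonneg (norm_nonneg _) _))
    _ = c * (2 * R) ^ α * dist (u : X) v ^ (1 - α) := by
        rw [dist_eq_norm, Submodule.coe_sub]
        ring

theorem stmt1_general {X : Type*} [NormedAddCommGroup X] [NormedSpace ℝ X] [CompleteSpace X]
    (D : Submodule ℝ X) (A : D →ₗ[ℝ] X) (B : X →ₗ[ℝ] X)
    (Ainv : X →L[ℝ] X) (hAinvcpt : IsCompactOperator Ainv)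
    (hleft : ∀ u : D, Ainv (A u) = (u : X))
    (α c : ℝ) (hα : α ∈ Set.Ico (0 : ℝ) 1) (hc : 0 < c)
    (hB : ∀ u : D, ‖B u‖ ≤ c * ‖(u : X)‖ ^ (1 - α) * ‖A u‖ ^ α)
    (u : ℕ → D) (M : ℝ)
    (hbdA : ∀ n, ‖A (u n)‖ ≤ M) :
    ∃ (φ : ℕ → ℕ) (l : X), StrictMono φ ∧
      Filter.Tendsto (fun n => B (u (φ n))) Filter.atTop (nhds l) := by
  have hAu : IsBounded (range fun n => A (u n)) :=
    isBounded_iff_forall_norm_le.2 ⟨M, forall_mem_range.2 hbdA⟩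
  obtain ⟨x, φ, hφ, hx⟩ := hAinvcpt.exists_tendsto_subseq hAu
  have hu : Tendsto (fun n => (u (φ n) : X)) atTop (𝓝 x) := by
    simpa [Function.comp_def, hleft] using hx
  have hBu : CauchySeq fun n => B (u (φ n)) :=
    hu.cauchySeq.of_dist_le_mul_rpow (sub_pos.2 hα.2) fun _ _ =>
      dist_le_of_norm_le_mul_rpow_mul_rpow hα.1 hc.le hB (hbdA _) (hbdA _)
  obtain ⟨l, hl⟩ := cauchySeq_tendsto_of_complete hBu
  exact ⟨φ, l, hφ, hl⟩

/-- If `A` is a closed operator with compact inverse and `‖Bu‖ ≤ c‖u‖^{1-α}‖Au‖^α`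
with `α ∈ [0,1)`, then `B` is `A`-compact: any sequence bounded in the graph norm of `A`
has a subsequence along which `B uₙ` converges. -/
theorem stmt1 {X : Type*} [NormedAddCommGroup X] [NormedSpace ℝ X] [CompleteSpace X]
    (D : Submodule ℝ X) (A : D →ₗ[ℝ] X) (B : X →ₗ[ℝ] X)
    (hclosed : IsClosed (Set.range fun u : D => ((u : X), A u)))
    (Ainv : X →L[ℝ] X) (hAinvcpt : IsCompactOperator Ainv)
    (hmemD : ∀ x : X, Ainv x ∈ D)
    (hright : ∀ x : X, A ⟨Ainv x, hmemD x⟩ = x)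
    (hleft : ∀ u : D, Ainv (A u) = (u : X))
    (α c : ℝ) (hα : α ∈ Set.Ico (0 : ℝ) 1) (hc : 0 < c)
    (hB : ∀ u : D, ‖B u‖ ≤ c * ‖(u : X)‖ ^ (1 - α) * ‖A u‖ ^ α)
    (u : ℕ → D) (M : ℝ)
    (hbd : ∀ n, ‖(u n : X)‖ ≤ M) (hbdA : ∀ n, ‖A (u n)‖ ≤ M) :
    ∃ (φ : ℕ → ℕ) (l : X), StrictMono φ ∧
      Filter.Tendsto (fun n => B (u (φ n))) Filter.atTop (nhds l) :=
  stmt1_general D A B Ainv hAinvcpt hleft α c hα hc hB u M hbdA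
end

section
/- Fix λ ∈ ℝ, λ ≠ 0, β > 0, and let I = diag(A,B,C) be a positive-definite diagonal 3×3 matrix. Suppose (λ²/β²)(C−A) ≠ 1 and (λ²/β²)(C−B) ≠ 1. Then the set of pairs (ω, z) ∈ ℝ³ × ℝ³ satisfying the system −λ e₃ × (I ω) + e₃ × (λ C ω − β² z) = 0 and −ω × e₃ − λ e₃ × z = 0 is exactly {(r e₃, z e₃) : r, z ∈ ℝ}; in particular this solution set is a 2-dimensional subspace of ℝ³ × ℝ³. -/
open Matrix

/-- `I·w = (A w₁, B w₂, C w₃)` for `I = diag(A,B,C)`. -/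
noncomputable def Iv (A B C : ℝ) (w : Fin 3 → ℝ) : Fin 3 → ℝ := ![A * w 0, B * w 1, C * w 2]

/-!
Since `e₃ × v = (-v₁, v₀, 0)`, both equations only see the horizontal components of `ω` and
`z`, and they split into one `2 × 2` linear system per horizontal axis `X ∈ {A, B}`:
`λ (C - X) ω_X = β² z_X` and `ω_X = λ z_X`. Its determinant is `λ² (C - X) - β²`, which is
nonzero exactly when `(λ²/β²)(C - X) ≠ 1`. Hence the horizontal components vanish, while the
vertical ones are free.
-/

lemma e3_cross_apply (v : Fin 3 → ℝ) : crossProduct e3 v = ![-v 1, v 0, 0] := by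
  simp [e3, cross_apply]

lemma cross_e3_apply (v : Fin 3 → ℝ) : crossProduct v e3 = ![v 1, -v 0, 0] := by
  simp [e3, cross_apply]

lemma exists_eq_smul_e3_iff (v : Fin 3 → ℝ) : (∃ r : ℝ, v = r • e3) ↔ v 0 = 0 ∧ v 1 = 0 := by
  constructor
  · rintro ⟨r, rfl⟩
    simp [e3]
  · rintro ⟨h0, h1⟩
    refine ⟨v 2, funext fun i => ?_⟩
    fin_cases i <;> simp [e3, h0, h1]

lemma horizontal_mode_eq_zero {lam β K w z : ℝ} (hβ : β ≠ 0) (hK : lam ^ 2 / β ^ 2 * K ≠ 1)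
    (hrot : lam * K * w = β ^ 2 * z) (hlin : w = lam * z) : w = 0 ∧ z = 0 := by
  have hdet : lam ^ 2 * K - β ^ 2 ≠ 0 := by
    intro h
    apply hK
    field_simp
    linarith
  have hz : z = 0 := by
    have h : (lam ^ 2 * K - β ^ 2) * z = 0 := by
      linear_combination hrot - lam * K * hlin
    exact (mul_eq_zero.1 h).resolve_left hdet
  exact ⟨by rw [hlin, hz, mul_zero], hz⟩

lemma spinningTop_equations_iff (lam β A B C : ℝ) (w z : Fin 3 → ℝ) :
    (-lam • crossProduct e3 (Iv A B C w) + crossProduct e3 ((lam * C) • w - β ^ 2 • z) = 0 ∧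
        -crossProduct w e3 - lam • crossProduct e3 z = 0) ↔
      (lam * (C - A) * w 0 = β ^ 2 * z 0 ∧ lam * (C - B) * w 1 = β ^ 2 * z 1) ∧
        (w 0 = lam * z 0 ∧ w 1 = lam * z 1) := by
  simp only [e3_cross_apply, cross_e3_apply, Iv, funext_iff, Fin.forall_fin_succ,
    IsEmpty.forall_iff]
  simp only [Nat.succ_eq_add_one, Nat.reduceAdd, Fin.isValue, cons_val_one, cons_val_zero,
    neg_smul, smul_cons, smul_eq_mul, mul_neg, mul_zero, smul_empty, neg_cons, neg_neg, neg_zero,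
    neg_empty, Pi.sub_apply, Pi.smul_apply, neg_sub, Pi.add_apply, Pi.zero_apply,
    Fin.succ_zero_eq_one, Fin.succ_one_eq_two, cons_val, add_zero, and_self, and_true,
    sub_neg_eq_add, sub_self]
  constructor <;> rintro ⟨⟨h10, h11⟩, h20, h21⟩ <;> refine ⟨⟨?_, ?_⟩, ?_, ?_⟩ <;> linarith

noncomputable def verticalPairs : ℝ × ℝ →ₗ[ℝ] (Fin 3 → ℝ) × (Fin 3 → ℝ) :=
  (LinearMap.toSpanSingleton ℝ _ e3).prodMap (LinearMap.toSpanSingleton ℝ _ e3)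

lemma verticalPairs_injective : Function.Injective verticalPairs := by
  intro x y hxy
  have h := congrArg (fun p : (Fin 3 → ℝ) × (Fin 3 → ℝ) => (p.1 2, p.2 2)) hxy
  simpa [verticalPairs, e3] using h

lemma coe_range_verticalPairs :
    (LinearMap.range verticalPairs : Set ((Fin 3 → ℝ) × (Fin 3 → ℝ))) =
      {p | ∃ r s : ℝ, p = (r • e3, s • e3)} := by
  ext p
  simp [verticalPairs, eq_comm, Prod.ext_iff]

lemma finrank_range_verticalPairs : Module.finrank ℝ (LinearMap.range verticalPairs) = 2 := by
  rw [LinearMap.finrank_range_of_inj verticalPairs_injective, Module.finrank_prod,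
    Module.finrank_self]

theorem stmt3_general (lam β A B C : ℝ) (hβ : 0 < β)
    (hKA : lam ^ 2 / β ^ 2 * (C - A) ≠ 1) (hKB : lam ^ 2 / β ^ 2 * (C - B) ≠ 1) :
    {p : (Fin 3 → ℝ) × (Fin 3 → ℝ) |
        -lam • crossProduct e3 (Iv A B C p.1)
            + crossProduct e3 ((lam * C) • p.1 - β ^ 2 • p.2) = 0 ∧
        -crossProduct p.1 e3 - lam • crossProduct e3 p.2 = 0}
      = {p | ∃ r s : ℝ, p = (r • e3, s • e3)} ∧
    ∃ W : Submodule ℝ ((Fin 3 → ℝ) × (Fin 3 → ℝ)),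
      (W : Set ((Fin 3 → ℝ) × (Fin 3 → ℝ))) = {p | ∃ r s : ℝ, p = (r • e3, s • e3)} ∧
      Module.finrank ℝ W = 2 := by
  refine ⟨?_, _, coe_range_verticalPairs, finrank_range_verticalPairs⟩
  ext ⟨w, z⟩
  simp only [Set.mem_ofPred_eq, spinningTop_equations_iff, Prod.mk.injEq, exists_and_left,
    exists_and_right, exists_eq_smul_e3_iff]
  constructor
  · rintro ⟨⟨hA0, hB1⟩, h0, h1⟩
    obtain ⟨hw0, hz0⟩ := horizontal_mode_eq_zero hβ.ne' hKA hA0 h0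
    obtain ⟨hw1, hz1⟩ := horizontal_mode_eq_zero hβ.ne' hKB hB1 h1
    exact ⟨⟨hw0, hw1⟩, hz0, hz1⟩
  · rintro ⟨⟨hw0, hw1⟩, hz0, hz1⟩
    simp [hw0, hw1, hz0, hz1]

/-- If `K_A ≠ 1` and `K_B ≠ 1`, the solution set of
`−λ e₃ × (Iω) + e₃ × (λCω − β²z) = 0`, `−ω × e₃ − λ e₃ × z = 0`
is exactly `{(r e₃, s e₃)}`, a 2-dimensional subspace of `ℝ³ × ℝ³`. -/
theorem stmt3 (lam β A B C : ℝ) (hlam : lam ≠ 0) (hβ : 0 < β)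
    (hA : 0 < A) (hB : 0 < B) (hC : 0 < C)
    (hKA : lam ^ 2 / β ^ 2 * (C - A) ≠ 1) (hKB : lam ^ 2 / β ^ 2 * (C - B) ≠ 1) :
    {p : (Fin 3 → ℝ) × (Fin 3 → ℝ) |
        -lam • crossProduct e3 (Iv A B C p.1)
            + crossProduct e3 ((lam * C) • p.1 - β ^ 2 • p.2) = 0 ∧
        -crossProduct p.1 e3 - lam • crossProduct e3 p.2 = 0}
      = {p | ∃ r s : ℝ, p = (r • e3, s • e3)} ∧
    ∃ W : Submodule ℝ ((Fin 3 → ℝ) × (Fin 3 → ℝ)),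
      (W : Set ((Fin 3 → ℝ) × (Fin 3 → ℝ))) = {p | ∃ r s : ℝ, p = (r • e3, s • e3)} ∧
      Module.finrank ℝ W = 2 :=
  stmt3_general lam β A B C hβ hKA hKB
end

section
/- Fix λ ≠ 0, β > 0, and I = diag(A,B,C) positive definite with (λ²/β²)(C−A) ≠ 1 and (λ²/β²)(C−B) ≠ 1. Suppose (ω₀, z₀) = (r e₃, s e₃) for some r, s ∈ ℝ, and suppose there exist ω, z ∈ ℝ³ with −λ e₃ × (I·(ω)) − λ C ω × e₃ − β² e₃ × z = C r e₃ and (ω − λ z) × e₃ = −s e₃. Then r = 0 and s = 0. -/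
open Matrix

/-! Take the dot product of both equations with `e₃`: every cross product in them has `e₃` as a
factor, hence is orthogonal to `e₃`, which leaves `C r = 0` and `-s = 0`. -/

theorem e3_dotProduct_self : e3 ⬝ᵥ e3 = 1 := by
  simp [e3, dotProduct, Fin.sum_univ_three]

theorem stmt4_general (lam β A B C : ℝ) (hC : 0 < C)
    (r s : ℝ)
    (h : ∃ ω z : Fin 3 → ℝ,
      -lam • crossProduct e3 (Iv A B C ω) - (lam * C) • crossProduct ω e3
          - β ^ 2 • crossProduct e3 z = (C * r) • e3 ∧
      crossProduct (ω - lam • z) e3 = (-s) • e3) :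
    r = 0 ∧ s = 0 := by
  obtain ⟨ω, z, hω, hz⟩ := h
  have hCr : C * r = 0 := by
    have := congrArg (e3 ⬝ᵥ ·) hω
    simp only [dotProduct_sub, dotProduct_smul, dot_self_cross, dot_cross_self,
      e3_dotProduct_self] at this
    simpa using this.symm
  have hs : s = 0 := by
    have := congrArg (e3 ⬝ᵥ ·) hz
    simp only [dotProduct_smul, dot_cross_self, e3_dotProduct_self] at this
    simpa using this.symm
  exact ⟨(mul_eq_zero.mp hCr).resolve_left hC.ne', hs⟩

/-- If the null-space element `(r e₃, s e₃)` lies in the range of the linearized operator,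
i.e. there are `ω, z` with `−λ e₃ × (Iω) − λC ω × e₃ − β² e₃ × z = C r e₃` and
`(ω − λ z) × e₃ = −s e₃`, then `r = s = 0`. -/
theorem stmt4 (lam β A B C : ℝ) (hlam : lam ≠ 0) (hβ : 0 < β)
    (hA : 0 < A) (hB : 0 < B) (hC : 0 < C)
    (hKA : lam ^ 2 / β ^ 2 * (C - A) ≠ 1) (hKB : lam ^ 2 / β ^ 2 * (C - B) ≠ 1)
    (r s : ℝ)
    (h : ∃ ω z : Fin 3 → ℝ,
      -lam • crossProduct e3 (Iv A B C ω) - (lam * C) • crossProduct ω e3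
          - β ^ 2 • crossProduct e3 z = (C * r) • e3 ∧
      crossProduct (ω - lam • z) e3 = (-s) • e3) :
    r = 0 ∧ s = 0 :=
  stmt4_general lam β A B C hC r s h
end

section
/- Let ω*, z : ℝ → ℝ³ and a : ℝ → ℝ³ be C¹ functions, I = diag(A,B,C) positive definite, λ ≠ 0, β > 0, satisfying the ODE system I·ω̇* − λ e₃ × (I·ω*) − λ C (ω* + a) × e₃ = β² e₃ × z and ż − (ω* + a) × e₃ − λ e₃ × z = 0. Set δ = λ²C − β². Then (1/2) d/dt( ω*·I·ω* + δ|z|² − 2λ z·I·ω* ) + a·I·ω̇* = 0. -/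
open Matrix

/-- Energy identity for the rigid/orientation part of the linearized top:
along solutions of `I·ω̇* − λ e₃ × (I·ω*) − λC (ω*+a) × e₃ = β² e₃ × z` and
`ż − (ω*+a) × e₃ − λ e₃ × z = 0`, with `δ = λ²C − β²`,
`(1/2) d/dt (ω*·Iω* + δ|z|² − 2λ z·Iω*) + a·(I·ω̇*) = 0`. -/
theorem stmt9 (lam β A B C δ : ℝ) (hlam : lam ≠ 0) (hβ : 0 < β)
    (hA : 0 < A) (hB : 0 < B) (hC : 0 < C)
    (hδ : δ = lam ^ 2 * C - β ^ 2)
    (ωs z a : ℝ → (Fin 3 → ℝ))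
    (hωs : ContDiff ℝ 1 ωs) (hz : ContDiff ℝ 1 z) (ha : ContDiff ℝ 1 a)
    (heq1 : ∀ t : ℝ,
      Iv A B C (deriv ωs t) - lam • crossProduct e3 (Iv A B C (ωs t))
        - (lam * C) • crossProduct (ωs t + a t) e3 = β ^ 2 • crossProduct e3 (z t))
    (heq2 : ∀ t : ℝ,
      deriv z t - crossProduct (ωs t + a t) e3 - lam • crossProduct e3 (z t) = 0) :
    ∀ t : ℝ,
      HasDerivAt (fun s => ωs s ⬝ᵥ Iv A B C (ωs s) + δ * (z s ⬝ᵥ z s)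
          - 2 * lam * (z s ⬝ᵥ Iv A B C (ωs s)))
        (-2 * (a t ⬝ᵥ Iv A B C (deriv ωs t))) t := by
  intro t
  have hω1 : HasDerivAt ωs (deriv ωs t) t :=
    ((hωs.differentiable one_ne_zero) t).hasDerivAt
  have hz1 : HasDerivAt z (deriv z t) t :=
    ((hz.differentiable one_ne_zero) t).hasDerivAt
  have hωc : ∀ i, HasDerivAt (fun s => ωs s i) (deriv ωs t i) t :=
    fun i => hasDerivAt_pi.mp hω1 i
  have hzc : ∀ i, HasDerivAt (fun s => z s i) (deriv z t i) t :=
    fun i => hasDerivAt_pi.mp hz1 i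
  have E10 := congrFun (heq1 t) 0
  have E11 := congrFun (heq1 t) 1
  have E12 := congrFun (heq1 t) 2
  have E20 := congrFun (heq2 t) 0
  have E21 := congrFun (heq2 t) 1
  have E22 := congrFun (heq2 t) 2
  simp only [cross_apply, e3, Iv, Pi.sub_apply, Pi.add_apply, Pi.smul_apply, smul_eq_mul,
    Matrix.cons_val_zero, Matrix.cons_val_one, Matrix.head_cons, Matrix.cons_val_two,
    Matrix.tail_cons, Pi.zero_apply] at E10 E11 E12 E20 E21 E22
  have H : HasDerivAt (fun s => (ωs s 0 * (A * ωs s 0) + ωs s 1 * (B * ωs s 1)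
        + ωs s 2 * (C * ωs s 2))
      + δ * (z s 0 * z s 0 + (z s 1 * z s 1 + z s 2 * z s 2))
      - 2 * lam * (z s 0 * (A * ωs s 0) + z s 1 * (B * ωs s 1) + z s 2 * (C * ωs s 2)))
      (((deriv ωs t 0 * (A * ωs t 0) + ωs t 0 * (A * deriv ωs t 0))
        + (deriv ωs t 1 * (B * ωs t 1) + ωs t 1 * (B * deriv ωs t 1))
        + (deriv ωs t 2 * (C * ωs t 2) + ωs t 2 * (C * deriv ωs t 2)))
      + δ * ((deriv z t 0 * z t 0 + z t 0 * deriv z t 0)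
        + ((deriv z t 1 * z t 1 + z t 1 * deriv z t 1)
          + (deriv z t 2 * z t 2 + z t 2 * deriv z t 2)))
      - 2 * lam * ((deriv z t 0 * (A * ωs t 0) + z t 0 * (A * deriv ωs t 0))
        + (deriv z t 1 * (B * ωs t 1) + z t 1 * (B * deriv ωs t 1))
        + (deriv z t 2 * (C * ωs t 2) + z t 2 * (C * deriv ωs t 2)))) t := by
    have h1 := ((hωc 0).mul ((hωc 0).const_mul A)).add ((hωc 1).mul ((hωc 1).const_mul B))
    have h2 := h1.add ((hωc 2).mul ((hωc 2).const_mul C))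
    have h3 := (((hzc 0).mul (hzc 0)).add (((hzc 1).mul (hzc 1)).add ((hzc 2).mul (hzc 2)))).const_mul δ
    have h4 := (((hzc 0).mul ((hωc 0).const_mul A)).add ((hzc 1).mul ((hωc 1).const_mul B))).add ((hzc 2).mul ((hωc 2).const_mul C))
    exact h2.add h3 |>.sub (h4.const_mul (2 * lam))
  have hfun : (fun s : ℝ => ωs s ⬝ᵥ Iv A B C (ωs s) + δ * (z s ⬝ᵥ z s)
      - 2 * lam * (z s ⬝ᵥ Iv A B C (ωs s)))
      = (fun s => (ωs s 0 * (A * ωs s 0) + ωs s 1 * (B * ωs s 1)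
        + ωs s 2 * (C * ωs s 2))
      + δ * (z s 0 * z s 0 + (z s 1 * z s 1 + z s 2 * z s 2))
      - 2 * lam * (z s 0 * (A * ωs s 0) + z s 1 * (B * ωs s 1) + z s 2 * (C * ωs s 2))) := by
    funext s
    simp only [dotProduct, Fin.sum_univ_three, Iv, Matrix.cons_val_zero, Matrix.cons_val_one,
      Matrix.head_cons, Matrix.cons_val_two, Matrix.tail_cons]
    ring
  have hd : -2 * (a t ⬝ᵥ Iv A B C (deriv ωs t)) = (((deriv ωs t 0 * (A * ωs t 0) + ωs t 0 * (A * deriv ωs t 0))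
        + (deriv ωs t 1 * (B * ωs t 1) + ωs t 1 * (B * deriv ωs t 1)))
        + (deriv ωs t 2 * (C * ωs t 2) + ωs t 2 * (C * deriv ωs t 2)))
      + δ * ((deriv z t 0 * z t 0 + z t 0 * deriv z t 0)
        + ((deriv z t 1 * z t 1 + z t 1 * deriv z t 1)
          + (deriv z t 2 * z t 2 + z t 2 * deriv z t 2)))
      - 2 * lam * (((deriv z t 0 * (A * ωs t 0) + z t 0 * (A * deriv ωs t 0))
        + (deriv z t 1 * (B * ωs t 1) + z t 1 * (B * deriv ωs t 1)))
        + (deriv z t 2 * (C * ωs t 2) + z t 2 * (C * deriv ωs t 2))) := by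
    simp only [dotProduct, Fin.sum_univ_three, Iv, Matrix.cons_val_zero, Matrix.cons_val_one,
      Matrix.head_cons, Matrix.cons_val_two, Matrix.tail_cons]
    subst hδ
    linear_combination (-2 * ωs t 0 - 2 * a t 0 + 2 * lam * z t 0) * E10
      + (-2 * ωs t 1 - 2 * a t 1 + 2 * lam * z t 1) * E11
      + (-2 * ωs t 2 - 2 * a t 2 + 2 * lam * z t 2) * E12
      + (-(2 * (lam ^ 2 * C - β ^ 2)) * z t 0 + 2 * lam * A * ωs t 0) * E20
      + (-(2 * (lam ^ 2 * C - β ^ 2)) * z t 1 + 2 * lam * B * ωs t 1) * E21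
      + (-(2 * (lam ^ 2 * C - β ^ 2)) * z t 2 + 2 * lam * C * ωs t 2) * E22
  rw [hfun, hd]
  exact H
end

section
/- Let ω : ℝ → ℝ³ be constant (ω̇ = 0), I = diag(A,B,C) positive definite, λ ≠ 0, β > 0, and z : ℝ → ℝ³ C¹, satisfying I·ω̇ − λ e₃ × (I·ω) − λ C ω × e₃ = β² e₃ × z and ż − ω × e₃ − λ C e₃ × z = 0 for all t. Then ż ≡ 0, i.e., z is constant. -/
open Matrix

/-! The first equation with `ω̇ = 0` pins `e₃ × z`, hence the first two components of `z`, so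
they have zero derivative; dotting the second equation with `e₃` kills both cross products and
leaves `ż₃ = 0`. -/

theorem e3_cross (v : Fin 3 → ℝ) : e3 ⨯₃ v = ![-v 1, v 0, 0] := by
  ext i
  fin_cases i <;> simp [cross_apply, e3]

theorem e3_dotProduct (v : Fin 3 → ℝ) : e3 ⬝ᵥ v = v 2 := by
  simp [e3, dotProduct, Fin.sum_univ_three]

theorem apply_eq_of_e3_cross_eq {v w : Fin 3 → ℝ} (h : e3 ⨯₃ v = e3 ⨯₃ w) :
    v 0 = w 0 ∧ v 1 = w 1 := by
  rw [e3_cross, e3_cross] at h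
  exact ⟨by simpa using congrFun h 1, by simpa using congrFun h 0⟩

theorem deriv_apply_eq_zero_of_apply_const {𝕜 ι : Type*} [NontriviallyNormedField 𝕜]
    [Fintype ι] {f : 𝕜 → ι → 𝕜} {i : ι} (h : ∀ t s, f t i = f s i) (t : 𝕜) :
    deriv f t i = 0 := by
  by_cases hf : DifferentiableAt 𝕜 f t
  · have hi := hasDerivAt_pi.1 hf.hasDerivAt i
    rw [show (fun s => f s i) = fun _ => f t i from funext fun s => h s t] at hi
    exact hi.unique (hasDerivAt_const t _)
  · simp [deriv_zero_of_not_differentiableAt hf]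

theorem stmt10_general (lam β A B C : ℝ) (hβ : 0 < β)
    (ω : Fin 3 → ℝ) (z : ℝ → (Fin 3 → ℝ)) (hz : Differentiable ℝ z)
    (heq1 : ∀ t : ℝ,
      Iv A B C 0 - lam • crossProduct e3 (Iv A B C ω)
        - (lam * C) • crossProduct ω e3 = β ^ 2 • crossProduct e3 (z t))
    (heq2 : ∀ t : ℝ,
      deriv z t - crossProduct ω e3 - (lam * C) • crossProduct e3 (z t) = 0) :
    (∀ t : ℝ, deriv z t = 0) ∧ ∀ t s : ℝ, z t = z s := by
  have hplanar (t s : ℝ) : z t 0 = z s 0 ∧ z t 1 = z s 1 :=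
    apply_eq_of_e3_cross_eq <|
      smul_right_injective _ (pow_ne_zero 2 hβ.ne') ((heq1 t).symm.trans (heq1 s))
  have hvertical (t : ℝ) : deriv z t 2 = 0 := by
    have h := congrArg (e3 ⬝ᵥ ·) (heq2 t)
    simpa only [dotProduct_sub, dotProduct_smul, dot_self_cross, dot_cross_self, smul_zero,
      sub_zero, dotProduct_zero, e3_dotProduct] using h
  have hderiv (t : ℝ) : deriv z t = 0 := by
    ext i
    fin_cases i
    · exact deriv_apply_eq_zero_of_apply_const (fun t s => (hplanar t s).1) t
    · exact deriv_apply_eq_zero_of_apply_const (fun t s => (hplanar t s).2) t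
    · exact hvertical t
  exact ⟨hderiv, is_const_of_deriv_eq_zero hz hderiv⟩

/-- On the ω-limit set: if `ω` is constant (`ω̇ = 0`) and
`I·ω̇ − λ e₃ × (I·ω) − λC ω × e₃ = β² e₃ × z`, `ż − ω × e₃ − λC e₃ × z = 0`,
then `ż ≡ 0`, i.e. `z` is constant. -/
theorem stmt10 (lam β A B C : ℝ) (hlam : lam ≠ 0) (hβ : 0 < β)
    (hA : 0 < A) (hB : 0 < B) (hC : 0 < C)
    (ω : Fin 3 → ℝ) (z : ℝ → (Fin 3 → ℝ)) (hz : Differentiable ℝ z)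
    (heq1 : ∀ t : ℝ,
      Iv A B C 0 - lam • crossProduct e3 (Iv A B C ω)
        - (lam * C) • crossProduct ω e3 = β ^ 2 • crossProduct e3 (z t))
    (heq2 : ∀ t : ℝ,
      deriv z t - crossProduct ω e3 - (lam * C) • crossProduct e3 (z t) = 0) :
    (∀ t : ℝ, deriv z t = 0) ∧ ∀ t s : ℝ, z t = z s :=
  stmt10_general lam β A B C hβ ω z hz heq1 heq2
end

section
/- Let f : [0,∞) → [0,∞) be continuous with ∫₀^∞ f(t) dt < ∞, and suppose E : [0,∞) → [0,∞) is C¹ and satisfies E'(t) + c₁ E(t) ≤ c₂ √(E(t)/κ₀) for constants c₁, c₂, κ₀ > 0, together with κ₀‖v(t)‖² ≤ E(t) ≤ ‖v(t)‖² where ∫₀^∞ ‖v(t)‖² dt < ∞. Then lim_{t→∞} E(t) = 0 (hence ‖v(t)‖ → 0). -/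
/-!
Maximizing `x ↦ c₂ √(x / κ₀) - c₁ x` over `x ≥ 0` turns the differential inequality into the
bound `E' ≤ c₂² / (4 c₁ κ₀)`, so `E` grows at most linearly. A nonnegative integrable function
with this property tends to zero: a value `f t ≥ ε` keeps `f ≥ ε / 2` on a window of fixed
length ending at `t`, while the integral over that window, a difference of two convergent
integrals `∫ₐᵗ f`, tends to zero.
-/

open MeasureTheory Set Filter Topology

theorem mul_sqrt_div_sub_mul_le {a b κ x : ℝ} (ha : 0 < a) (hκ : 0 < κ) (hx : 0 ≤ x) :
    b * √(x / κ) - a * x ≤ b ^ 2 / (4 * a * κ) := by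
  set s := √(x / κ)
  have hxs : x = κ * s ^ 2 := by
    rw [Real.sq_sqrt (by positivity)]
    field_simp
  rw [le_div_iff₀ (by positivity), hxs]
  nlinarith [sq_nonneg (2 * a * κ * s - b)]

theorem tendsto_intervalIntegral_sub_self_atTop {f : ℝ → ℝ} {a : ℝ}
    (hf : IntegrableOn f (Ioi a)) (h : ℝ) :
    Tendsto (fun t => ∫ τ in (t - h)..t, f τ) atTop (𝓝 0) := by
  have hlim := (intervalIntegral_tendsto_integral_Ioi a hf tendsto_id).sub
    (intervalIntegral_tendsto_integral_Ioi a hf (tendsto_atTop_add_const_right _ (-h) tendsto_id))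
  rw [sub_self] at hlim
  refine hlim.congr' ?_
  have hii : ∀ b, a ≤ b → IntervalIntegrable f volume a b := fun b hb =>
    (intervalIntegrable_iff_integrableOn_Ioc_of_le hb).2 (hf.mono_set Ioc_subset_Ioi_self)
  filter_upwards [eventually_ge_atTop a, eventually_ge_atTop (a + h)] with t hat haht
  exact intervalIntegral.integral_interval_sub_left (hii t hat) (hii (t - h) (by linarith))

section GrowthBound

variable {f f' : ℝ → ℝ} {a K : ℝ}

theorem sub_le_mul_sub_of_hasDerivAt_le (hf : ∀ t, a ≤ t → HasDerivAt f (f' t) t)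
    (hf'K : ∀ t, a ≤ t → f' t ≤ K) {s t : ℝ} (has : a ≤ s) (hst : s ≤ t) :
    f t - f s ≤ K * (t - s) :=
  (convex_Ici a).image_sub_le_mul_sub_of_deriv_le
    (fun x hx => (hf x hx).continuousAt.continuousWithinAt)
    (fun x hx => (hf x (interior_subset hx)).differentiableAt.differentiableWithinAt)
    (fun x hx => (hf x (interior_subset hx)).deriv ▸ hf'K x (interior_subset hx))
    s has t (has.trans hst) hst

theorem mul_sub_le_intervalIntegral_of_hasDerivAt_le (hint : IntegrableOn f (Ioi a))
    (hf : ∀ t, a ≤ t → HasDerivAt f (f' t) t) (hf'K : ∀ t, a ≤ t → f' t ≤ K) {h t : ℝ}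
    (hh : 0 ≤ h) (hat : a ≤ t - h) :
    h * (f t - |K| * h) ≤ ∫ τ in (t - h)..t, f τ := by
  have hii : IntervalIntegrable f volume (t - h) t :=
    (intervalIntegrable_iff_integrableOn_Ioc_of_le (by linarith)).2
      (hint.mono_set fun x hx => hat.trans_lt hx.1)
  calc h * (f t - |K| * h) = ∫ _ in (t - h)..t, (f t - |K| * h) := by
        rw [intervalIntegral.integral_const, sub_sub_cancel, smul_eq_mul]
    _ ≤ ∫ τ in (t - h)..t, f τ := by
      refine intervalIntegral.integral_mono_on (by linarith) intervalIntegrable_const hii ?_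
      intro τ ⟨hτl, hτr⟩
      have hKτ : K * (t - τ) ≤ |K| * h :=
        mul_le_mul (le_abs_self K) (by linarith) (by linarith) (abs_nonneg K)
      linarith [sub_le_mul_sub_of_hasDerivAt_le hf hf'K (hat.trans hτl) hτr]

theorem tendsto_zero_of_integrableOn_of_hasDerivAt_le (hint : IntegrableOn f (Ioi a))
    (hf0 : ∀ t, a ≤ t → 0 ≤ f t) (hf : ∀ t, a ≤ t → HasDerivAt f (f' t) t)
    (hf'K : ∀ t, a ≤ t → f' t ≤ K) :
    Tendsto f atTop (𝓝 0) := by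
  refine tendsto_order.2 ⟨fun ε hε => ?_, fun ε hε => ?_⟩
  · filter_upwards [eventually_ge_atTop a] with t ht
    exact hε.trans_le (hf0 t ht)
  · set h := ε / (2 * (|K| + 1)) with hdef
    have hh : 0 < h := by positivity
    have hKh : |K| * h ≤ ε / 2 :=
      calc |K| * h ≤ (|K| + 1) * h := by nlinarith
        _ = ε / 2 := by rw [hdef]; field_simp
    filter_upwards [(tendsto_intervalIntegral_sub_self_atTop hint h).eventually
      (gt_mem_nhds (show 0 < h * (ε / 2) by positivity)), eventually_ge_atTop (a + h)]
      with t hsmall ht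
    have hbound :=
      (mul_sub_le_intervalIntegral_of_hasDerivAt_le hint hf hf'K hh.le (by linarith)).trans_lt
        hsmall
    linarith [lt_of_mul_lt_mul_left hbound hh.le]

end GrowthBound

theorem stmt15_general {X : Type*} [NormedAddCommGroup X]
    (c₁ c₂ κ₀ : ℝ) (hc₁ : 0 < c₁) (hκ₀ : 0 < κ₀)
    (v : ℝ → X) (E E' : ℝ → ℝ)
    (hfint : IntegrableOn (fun t => ‖v t‖ ^ 2) (Set.Ici 0))
    (hE' : ∀ t : ℝ, 0 ≤ t → HasDerivAt E (E' t) t)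
    (hineq : ∀ t : ℝ, 0 ≤ t → E' t + c₁ * E t ≤ c₂ * Real.sqrt (E t / κ₀))
    (hlow : ∀ t : ℝ, 0 ≤ t → κ₀ * ‖v t‖ ^ 2 ≤ E t)
    (hup : ∀ t : ℝ, 0 ≤ t → E t ≤ ‖v t‖ ^ 2) :
    Filter.Tendsto E Filter.atTop (nhds 0) ∧
    Filter.Tendsto (fun t => ‖v t‖) Filter.atTop (nhds 0) := by
  have hE0 : ∀ t, 0 ≤ t → 0 ≤ E t := fun t ht => le_trans (by positivity) (hlow t ht)
  have hEint : IntegrableOn E (Ioi 0) :=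
    (hfint.mono_set Ioi_subset_Ici_self).mono'
      (ContinuousOn.aestronglyMeasurable
        (fun t ht => (hE' t (le_of_lt ht)).continuousAt.continuousWithinAt) measurableSet_Ioi)
      ((ae_restrict_iff' measurableSet_Ioi).2 <| ae_of_all _ fun t ht => by
        rw [Real.norm_of_nonneg (hE0 t ht.le)]
        exact hup t ht.le)
  have hE'le : ∀ t, 0 ≤ t → E' t ≤ c₂ ^ 2 / (4 * c₁ * κ₀) := fun t ht => by
    linarith [hineq t ht, mul_sqrt_div_sub_mul_le (b := c₂) hc₁ hκ₀ (hE0 t ht)]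
  have hElim := tendsto_zero_of_integrableOn_of_hasDerivAt_le hEint hE0 hE' hE'le
  refine ⟨hElim, squeeze_zero' (Eventually.of_forall fun t => norm_nonneg (v t)) ?_
    (by simpa using (hElim.div_const κ₀).sqrt)⟩
  filter_upwards [eventually_ge_atTop 0] with t ht
  rw [Real.le_sqrt (norm_nonneg _) (div_nonneg (hE0 t ht) hκ₀.le), le_div_iff₀ hκ₀]
  linarith [hlow t ht]

/-- Decay of the fluid energy: if `E' + c₁E ≤ c₂√(E/κ₀)`, `κ₀‖v‖² ≤ E ≤ ‖v‖²`, and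
`∫₀^∞ ‖v(t)‖² dt < ∞` with `t ↦ ‖v t‖²` continuous, then `E(t) → 0` (hence `‖v(t)‖ → 0`). -/
theorem stmt15 {X : Type*} [NormedAddCommGroup X]
    (c₁ c₂ κ₀ : ℝ) (hc₁ : 0 < c₁) (hc₂ : 0 < c₂) (hκ₀ : 0 < κ₀)
    (v : ℝ → X) (E E' : ℝ → ℝ)
    (hfcont : Continuous fun t => ‖v t‖ ^ 2)
    (hfint : IntegrableOn (fun t => ‖v t‖ ^ 2) (Set.Ici 0))
    (hE' : ∀ t : ℝ, 0 ≤ t → HasDerivAt E (E' t) t)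
    (hE'cont : ContinuousOn E' (Set.Ici 0))
    (hineq : ∀ t : ℝ, 0 ≤ t → E' t + c₁ * E t ≤ c₂ * Real.sqrt (E t / κ₀))
    (hlow : ∀ t : ℝ, 0 ≤ t → κ₀ * ‖v t‖ ^ 2 ≤ E t)
    (hup : ∀ t : ℝ, 0 ≤ t → E t ≤ ‖v t‖ ^ 2) :
    Filter.Tendsto E Filter.atTop (nhds 0) ∧
    Filter.Tendsto (fun t => ‖v t‖) Filter.atTop (nhds 0) :=
  stmt15_general c₁ c₂ κ₀ hc₁ hκ₀ v E E' hfint hE' hineq hlow hup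
end

section
/- Let λ ≠ 0 and let v : ℝ³ ⊇ C → ℝ³ be a smooth divergence-free vector field on a bounded C² domain C, vanishing on ∂C, and p a smooth function, satisfying ν Δv − ∇p = −2λ e₃ × v in C for some ν > 0. Then v ≡ 0 in C. -/
open Matrix MeasureTheory

/-- Partial derivative `∂f/∂xᵢ`. -/
noncomputable def pd (f : (Fin 3 → ℝ) → ℝ) (i : Fin 3) (x : Fin 3 → ℝ) : ℝ :=
  fderiv ℝ f x (Pi.single i 1)

/-- Laplacian of a scalar field on `ℝ³`. -/
noncomputable def lap (f : (Fin 3 → ℝ) → ℝ) (x : Fin 3 → ℝ) : ℝ :=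
  ∑ i : Fin 3, pd (pd f i) i x

section Aux

lemma contDiff_pd {f : (Fin 3 → ℝ) → ℝ} (hf : ContDiff ℝ (⊤ : ℕ∞) f) (i : Fin 3) :
    ContDiff ℝ (⊤ : ℕ∞) (pd f i) := by
  have h1 : ContDiff ℝ (⊤ : ℕ∞) (fun x => fderiv ℝ f x) := hf.fderiv_right (by simp)
  exact (ContinuousLinearMap.apply ℝ ℝ (Pi.single i 1 : Fin 3 → ℝ)).contDiff.comp h1

lemma pd_mul {f g : (Fin 3 → ℝ) → ℝ} {x : Fin 3 → ℝ} (hf : DifferentiableAt ℝ f x)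
    (hg : DifferentiableAt ℝ g x) (i : Fin 3) :
    pd (fun y => f y * g y) i x = pd f i x * g x + f x * pd g i x := by
  simp only [pd, fderiv_fun_mul hf hg]
  simp only [ContinuousLinearMap.add_apply, ContinuousLinearMap.smul_apply, smul_eq_mul]
  ring

lemma pd_sum {ι : Type*} (s : Finset ι) (f : ι → (Fin 3 → ℝ) → ℝ) {x : Fin 3 → ℝ}
    (hf : ∀ j ∈ s, DifferentiableAt ℝ (f j) x) (i : Fin 3) :
    pd (fun y => ∑ j ∈ s, f j y) i x = ∑ j ∈ s, pd (f j) i x := by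
  simp only [pd]
  rw [fderiv_fun_sum hf]
  simp

lemma pd_const_mul {f : (Fin 3 → ℝ) → ℝ} {x : Fin 3 → ℝ} (hf : DifferentiableAt ℝ f x)
    (c : ℝ) (i : Fin 3) : pd (fun y => c * f y) i x = c * pd f i x := by
  simp only [pd, fderiv_const_mul hf c]; simp

lemma pd_sub {f g : (Fin 3 → ℝ) → ℝ} {x : Fin 3 → ℝ} (hf : DifferentiableAt ℝ f x)
    (hg : DifferentiableAt ℝ g x) (i : Fin 3) :
    pd (fun y => f y - g y) i x = pd f i x - pd g i x := by
  simp only [pd, fderiv_fun_sub hf hg]; simp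

lemma const_of_fderiv_zero {E : Type*} [NormedAddCommGroup E] [NormedSpace ℝ E]
    {f : E → ℝ} (hfd : Differentiable ℝ f)
    {s : Set E} (hso : IsOpen s) (hsc : IsPreconnected s)
    (hz : ∀ x ∈ s, fderiv ℝ f x = 0) {x y : E} (hx : x ∈ s) (hy : y ∈ s) :
    f x = f y := by
  have key : ∀ z ∈ s, ∃ ε > 0, Metric.ball z ε ⊆ s ∧ ∀ w ∈ Metric.ball z ε, f w = f z := by
    intro z hz'
    obtain ⟨ε, hε, hball⟩ := Metric.isOpen_iff.mp hso z hz'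
    refine ⟨ε, hε, hball, fun w hw => ?_⟩
    refine (convex_ball z ε).is_const_of_fderivWithin_eq_zero hfd.differentiableOn
      (fun u hu => ?_) hw (Metric.mem_ball_self hε)
    rw [fderivWithin_of_isOpen Metric.isOpen_ball hu]
    exact hz u (hball hu)
  set U : Set E := {z | ∃ ε > 0, Metric.ball z ε ⊆ s ∧ f z = f x} with hU
  set V : Set E := {z | ∃ ε > 0, Metric.ball z ε ⊆ s ∧ f z ≠ f x} with hV
  have hUo : IsOpen U := by
    rw [Metric.isOpen_iff]
    rintro z ⟨ε, hε, hball, hzf⟩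
    obtain ⟨ε', hε', hball', hconst⟩ := key z (hball (Metric.mem_ball_self hε))
    refine ⟨ε', hε', fun w hw => ?_⟩
    obtain ⟨ε'', hε'', hball''⟩ := Metric.isOpen_iff.mp hso w (hball' hw)
    exact ⟨ε'', hε'', hball'', (hconst w hw).trans hzf⟩
  have hVo : IsOpen V := by
    rw [Metric.isOpen_iff]
    rintro z ⟨ε, hε, hball, hzf⟩
    obtain ⟨ε', hε', hball', hconst⟩ := key z (hball (Metric.mem_ball_self hε))
    refine ⟨ε', hε', fun w hw => ?_⟩
    obtain ⟨ε'', hε'', hball''⟩ := Metric.isOpen_iff.mp hso w (hball' hw)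
    exact ⟨ε'', hε'', hball'', by rw [hconst w hw]; exact hzf⟩
  have hdisj : Disjoint U V := by
    rw [Set.disjoint_left]
    rintro z ⟨_, _, _, h1⟩ ⟨_, _, _, h2⟩
    exact h2 h1
  have hsub : s ⊆ U ∪ V := by
    intro z hz'
    obtain ⟨ε, hε, hball⟩ := Metric.isOpen_iff.mp hso z hz'
    by_cases h : f z = f x
    · exact Or.inl ⟨ε, hε, hball, h⟩
    · exact Or.inr ⟨ε, hε, hball, h⟩
  have hsu : (s ∩ U).Nonempty := by
    obtain ⟨ε, hε, hball⟩ := Metric.isOpen_iff.mp hso x hx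
    exact ⟨x, hx, ε, hε, hball, rfl⟩
  have := hsc.subset_left_of_subset_union hUo hVo hdisj hsub hsu
  obtain ⟨_, _, _, h⟩ := this hy
  exact h.symm

lemma frontier_cc_sub {x : Fin 3 → ℝ} {C : Set (Fin 3 → ℝ)} (hCo : IsOpen C) :
    frontier (connectedComponentIn C x) ⊆ frontier C := by
  set U := connectedComponentIn C x with hUdef
  intro y hy
  have hUo : IsOpen U := hCo.connectedComponentIn
  have hUsub : U ⊆ C := connectedComponentIn_subset C x
  rw [hUo.frontier_eq] at hy
  obtain ⟨hycl, hynU⟩ := hy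
  have hynC : y ∉ C := by
    intro hyC
    have hnhds : connectedComponentIn C y ∈ nhds y :=
      connectedComponentIn_mem_nhds (hCo.mem_nhds hyC)
    obtain ⟨z, hz1, hz2⟩ := mem_closure_iff_nhds.mp hycl _ hnhds
    have e1 : connectedComponentIn C y = connectedComponentIn C z := connectedComponentIn_eq hz1
    have e2 : U = connectedComponentIn C z := connectedComponentIn_eq hz2
    exact hynU (e2 ▸ e1 ▸ mem_connectedComponentIn hyC)
  rw [frontier, hCo.interior_eq]
  exact ⟨closure_mono hUsub hycl, hynC⟩

lemma frontier_cc_nonempty {x : Fin 3 → ℝ} {C : Set (Fin 3 → ℝ)}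
    (hCb : Bornology.IsBounded C) (hx : x ∈ C) :
    (frontier (connectedComponentIn C x)).Nonempty := by
  set U := connectedComponentIn C x with hUdef
  rw [Set.nonempty_iff_ne_empty]
  intro h
  have hclopen : IsClopen U := isClopen_iff_frontier_eq_empty.mpr h
  rcases isClopen_iff.mp hclopen with h1 | h1
  · exact (connectedComponentIn_nonempty_iff.mpr hx).ne_empty h1
  · have : Bornology.IsBounded (Set.univ : Set (Fin 3 → ℝ)) :=
      h1 ▸ hCb.subset (connectedComponentIn_subset C x)
    obtain ⟨R, hR⟩ := this.subset_closedBall 0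
    have := hR (Set.mem_univ (Pi.single (0 : Fin 3) (|R| + 1)))
    rw [Metric.mem_closedBall, dist_zero_right] at this
    have hnorm : ‖(Pi.single (0 : Fin 3) (|R| + 1) : Fin 3 → ℝ)‖ = |R| + 1 := by
      rw [Pi.norm_single]
      simp [abs_of_nonneg (abs_nonneg R)]
      positivity
    rw [hnorm] at this
    have := le_abs_self R
    linarith

end Aux

/-- A smooth divergence-free field `v` on a bounded domain `C`, vanishing on `∂C` and
satisfying `νΔv − ∇p = −2λ e₃ × v` in `C`, must vanish identically in `C`.  (The `C²`
regularity of the domain is encoded by the validity of the divergence theorem `hdiv` for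
`C¹` fields vanishing on the boundary.) -/
theorem stmt17 (lam ν : ℝ) (hlam : lam ≠ 0) (hν : 0 < ν)
    (C : Set (Fin 3 → ℝ)) (hCo : IsOpen C) (hCb : Bornology.IsBounded C)
    (hdiv : ∀ F : (Fin 3 → ℝ) → (Fin 3 → ℝ), ContDiff ℝ 1 F →
      (∀ x ∈ frontier C, F x = 0) →
      (∫ x in C, ∑ i : Fin 3, pd (fun y => F y i) i x) = 0)
    (v : (Fin 3 → ℝ) → (Fin 3 → ℝ)) (p : (Fin 3 → ℝ) → ℝ)
    (hv : ContDiff ℝ (⊤ : ℕ∞) v) (hp : ContDiff ℝ (⊤ : ℕ∞) p)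
    (hdivfree : ∀ x ∈ C, ∑ i : Fin 3, pd (fun y => v y i) i x = 0)
    (hbc : ∀ x ∈ frontier C, v x = 0)
    (heq : ∀ x ∈ C, ∀ j : Fin 3,
      ν * lap (fun y => v y j) x - pd p j x = -(2 * lam) * crossProduct e3 (v x) j) :
    ∀ x ∈ C, v x = 0 := by
  -- basic differentiability facts
  have hvj : ∀ j : Fin 3, ContDiff ℝ (⊤ : ℕ∞) (fun y => v y j) := fun j => contDiff_pi.mp hv j
  have hdv : ∀ j : Fin 3, Differentiable ℝ (fun y => v y j) :=
    fun j => (hvj j).differentiable (by simp)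
  have hpdC : ∀ j i : Fin 3, ContDiff ℝ (⊤ : ℕ∞) (pd (fun y => v y j) i) :=
    fun j i => contDiff_pd (hvj j) i
  have hdpd : ∀ j i : Fin 3, Differentiable ℝ (pd (fun y => v y j) i) :=
    fun j i => (hpdC j i).differentiable (by simp)
  have hdp : Differentiable ℝ p := hp.differentiable (by simp)
  -- the flux field
  set F : (Fin 3 → ℝ) → (Fin 3 → ℝ) :=
    fun y i => ν * (∑ j : Fin 3, v y j * pd (fun z => v z j) i y) - p y * v y i with hF
  have hsumdiff : ∀ i : Fin 3,
      Differentiable ℝ (fun y => ∑ j : Fin 3, v y j * pd (fun z => v z j) i y) :=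
    fun i => Differentiable.fun_sum (fun j _ => (hdv j).mul (hdpd j i))
  have hFC1 : ContDiff ℝ 1 F := by
    rw [contDiff_pi]
    intro i
    refine ContDiff.sub ?_ ?_
    · exact contDiff_const.mul (ContDiff.sum (fun j _ => ((hvj j).mul (hpdC j i)).of_le (by simp)))
    · exact (hp.of_le (by simp)).mul ((hvj i).of_le (by simp))
  have hFbd : ∀ x ∈ frontier C, F x = 0 := by
    intro x hx
    funext i
    have h0 : v x = 0 := hbc x hx
    simp [hF, h0]
  have hint := hdiv F hFC1 hFbd
  -- pointwise divergence identity on C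
  have hdiveq : ∀ x ∈ C, (∑ i : Fin 3, pd (fun y => F y i) i x)
      = ν * ∑ i : Fin 3, ∑ j : Fin 3, pd (fun y => v y j) i x ^ 2 := by
    intro x hx
    have hFi : ∀ i : Fin 3, pd (fun y => F y i) i x
        = ν * (∑ j : Fin 3, (pd (fun y => v y j) i x * pd (fun z => v z j) i x
            + v x j * pd (pd (fun z => v z j) i) i x))
          - (pd p i x * v x i + p x * pd (fun y => v y i) i x) := by
      intro i
      have e1 : pd (fun y => F y i) i x
          = pd (fun y => ν * (∑ j : Fin 3, v y j * pd (fun z => v z j) i y)) i x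
            - pd (fun y => p y * v y i) i x := by
        exact pd_sub (((hsumdiff i).const_mul ν).differentiableAt)
          ((hdp.mul (hdv i)).differentiableAt) i
      rw [e1, pd_const_mul ((hsumdiff i).differentiableAt) ν i,
        pd_sum Finset.univ (fun j => fun y => v y j * pd (fun z => v z j) i y)
          (fun j _ => ((hdv j).mul (hdpd j i)).differentiableAt) i,
        pd_mul (hdp.differentiableAt) ((hdv i).differentiableAt) i]
      congr 2
      exact Finset.sum_congr rfl fun j _ =>
        pd_mul ((hdv j).differentiableAt) ((hdpd j i).differentiableAt) i
    have h0 := heq x hx 0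
    have h1 := heq x hx 1
    have h2 := heq x hx 2
    simp only [lap, Fin.sum_univ_three, crossProduct, e3] at h0 h1 h2
    norm_num [LinearMap.mk₂_apply, Matrix.cons_val_zero, Matrix.cons_val_one,
      Matrix.head_cons, Matrix.cons_val_two, Matrix.tail_cons] at h0 h1 h2
    have hdf := hdivfree x hx
    simp only [Fin.sum_univ_three] at hdf
    simp only [hFi, Fin.sum_univ_three]
    linear_combination v x 0 * h0 + v x 1 * h1 + v x 2 * h2 - p x * hdf
  -- hence the Dirichlet energy vanishes
  have hginteq : (∫ x in C, ν * ∑ i : Fin 3, ∑ j : Fin 3, pd (fun y => v y j) i x ^ 2) = 0 := by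
    rw [← setIntegral_congr_fun hCo.measurableSet hdiveq]
    exact hint
  set g : (Fin 3 → ℝ) → ℝ :=
    fun x => ν * ∑ i : Fin 3, ∑ j : Fin 3, pd (fun y => v y j) i x ^ 2 with hg
  have hgc : Continuous g := by
    refine continuous_const.mul ?_
    refine continuous_finset_sum _ fun i _ => continuous_finset_sum _ fun j _ => ?_
    exact ((hpdC j i).continuous).pow 2
  have hgnn : ∀ x, 0 ≤ g x := by
    intro x
    refine mul_nonneg hν.le ?_
    exact Finset.sum_nonneg fun i _ => Finset.sum_nonneg fun j _ => sq_nonneg _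
  have hgint : IntegrableOn g C := by
    have : IntegrableOn g (closure C) :=
      hgc.continuousOn.integrableOn_compact hCb.isCompact_closure
    exact this.mono_set subset_closure
  have hgae : g =ᵐ[volume.restrict C] 0 := by
    refine (setIntegral_eq_zero_iff_of_nonneg_ae ?_ hgint).mp hginteq
    exact Filter.Eventually.of_forall hgnn
  have hgzero : ∀ x ∈ C, g x = 0 := by
    intro x hx
    by_contra hne
    have hpos : 0 < g x := lt_of_le_of_ne (hgnn x) (Ne.symm hne)
    set W : Set (Fin 3 → ℝ) := C ∩ g ⁻¹' Set.Ioi 0 with hW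
    have hWo : IsOpen W := hCo.inter (isOpen_Ioi.preimage hgc)
    have hWx : x ∈ W := ⟨hx, hpos⟩
    have hWsub : W ⊆ {y | g y ≠ 0} := fun y hy => ne_of_gt hy.2
    have hzero : volume.restrict C {y | g y ≠ 0} = 0 := by
      have h := hgae
      rw [Filter.EventuallyEq, ae_iff] at h
      simpa using h
    have : volume.restrict C W = 0 := measure_mono_null hWsub hzero
    rw [Measure.restrict_apply' hCo.measurableSet] at this
    have hWC : W ∩ C = W := Set.inter_eq_left.mpr fun y hy => hy.1
    rw [hWC] at this
    exact (hWo.measure_pos volume ⟨x, hWx⟩).ne' this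
  -- all partial derivatives of v vanish on C
  have hpd0 : ∀ x ∈ C, ∀ i j : Fin 3, pd (fun y => v y j) i x = 0 := by
    intro x hx i j
    have h := hgzero x hx
    rw [hg] at h
    have hsum : (∑ i : Fin 3, ∑ j : Fin 3, pd (fun y => v y j) i x ^ 2) = 0 := by
      rcases mul_eq_zero.mp h with h' | h'
      · exact absurd h' hν.ne'
      · exact h'
    have h1 := (Finset.sum_eq_zero_iff_of_nonneg fun i _ =>
      Finset.sum_nonneg fun j _ => sq_nonneg _).mp hsum i (Finset.mem_univ i)
    have h2 := (Finset.sum_eq_zero_iff_of_nonneg fun j _ => sq_nonneg _).mp h1 j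
      (Finset.mem_univ j)
    exact pow_eq_zero_iff two_ne_zero |>.mp h2
  have hfd0 : ∀ j : Fin 3, ∀ x ∈ C, fderiv ℝ (fun y => v y j) x = 0 := by
    intro j x hx
    ext u
    have hu : u = ∑ i : Fin 3, u i • (fun k => if i = k then (1:ℝ) else 0) := pi_eq_sum_univ u
    have hbase : ∀ i : Fin 3, (fun k => if i = k then (1:ℝ) else 0) = Pi.single i 1 := by
      intro i
      funext k
      simp [Pi.single_apply, eq_comm]
    rw [ContinuousLinearMap.zero_apply]
    conv_lhs => rw [hu]
    rw [map_sum]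
    refine Finset.sum_eq_zero fun i _ => ?_
    rw [hbase i, ContinuousLinearMap.map_smul]
    have h := hpd0 x hx i j
    simp only [pd] at h
    rw [h, smul_zero]
  -- conclude v = 0 on C via connected components
  intro x hx
  set U := connectedComponentIn C x with hU
  have hUo : IsOpen U := hCo.connectedComponentIn
  have hUc : IsPreconnected U := isPreconnected_connectedComponentIn
  have hUsub : U ⊆ C := connectedComponentIn_subset C x
  have hxU : x ∈ U := mem_connectedComponentIn hx
  obtain ⟨y, hy⟩ := frontier_cc_nonempty hCb hx
  have hyC : y ∈ frontier C := frontier_cc_sub hCo hy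
  have hycl : y ∈ closure U := by
    rw [hUo.frontier_eq] at hy
    exact hy.1
  funext j
  have hconst : ∀ z ∈ U, v z j = v x j := by
    intro z hz
    exact const_of_fderiv_zero (hdv j) hUo hUc (fun w hw => hfd0 j w (hUsub hw)) hz hxU
  have hclosed : IsClosed {z | v z j = v x j} :=
    isClosed_eq (hdv j).continuous continuous_const
  have hyval : v y j = v x j := closure_minimal hconst hclosed hycl
  have hvy : v y = 0 := hbc y hyC
  show v x j = (0 : Fin 3 → ℝ) j
  rw [← hyval, hvy]
end

section
/- Let λ ≠ 0, β > 0, I = diag(A,B,C) positive definite with K_A := (λ²/β²)(C−A) ≠ 1 and K_B := (λ²/β²)(C−B) ≠ 1. Suppose ω, z ∈ ℝ³ satisfy ω = λ z + μ e₃ for some μ ∈ ℝ and −λ e₃ × (I·ω) + e₃ × (λ C ω − β² z) = 0. Then (1 − K_B) z₂ = 0 and (K_A − 1) z₁ = 0, hence z₁ = z₂ = 0 and z = z₃ e₃, ω = (λ z₃ + μ) e₃. -/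
/-!
The map `w ↦ e₃ × w` is linear with kernel the `e₃`-axis, so the torque balance
says exactly that the horizontal part of `w = −λ Iω + λCω − β²z` vanishes. Substituting
`ω = λz + μe₃`, the `e₃`-terms drop out of these components and what is left is
`(λ²(C−A) − β²) z₁ = 0` and `(λ²(C−B) − β²) z₂ = 0`; dividing by `β²` gives the two identities.
-/

open Matrix

lemma crossProduct_e3_eq_zero_iff (w : Fin 3 → ℝ) :
    crossProduct e3 w = 0 ↔ w 0 = 0 ∧ w 1 = 0 := by
  simp [cross_apply, e3, funext_iff, Fin.forall_fin_succ, and_comm]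

lemma eq_smul_e3_of_apply_zero_of_apply_one {v : Fin 3 → ℝ} (h0 : v 0 = 0) (h1 : v 1 = 0) :
    v = v 2 • e3 := by
  ext i
  fin_cases i <;> simp [e3, h0, h1]

section Torque

variable (lam β A B C μ : ℝ) (z : Fin 3 → ℝ)

lemma torque_apply_zero :
    (-lam • Iv A B C (lam • z + μ • e3) + (lam * C) • (lam • z + μ • e3) - β ^ 2 • z) 0 =
      (lam ^ 2 * (C - A) - β ^ 2) * z 0 := by
  simp [Iv, e3, vecHead, vecTail]
  ring

lemma torque_apply_one :
    (-lam • Iv A B C (lam • z + μ • e3) + (lam * C) • (lam • z + μ • e3) - β ^ 2 • z) 1 =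
      (lam ^ 2 * (C - B) - β ^ 2) * z 1 := by
  simp [Iv, e3, vecHead, vecTail]
  ring

end Torque

lemma div_sub_one_mul_eq_zero {k b x : ℝ} (hb : b ≠ 0) (h : (k - b) * x = 0) :
    (k / b - 1) * x = 0 := by
  rw [div_sub_one hb, div_mul_eq_mul_div, h, zero_div]

theorem stmt18_general (lam β A B C μ : ℝ) (hβ : 0 < β)
    (hKA : lam ^ 2 / β ^ 2 * (C - A) ≠ 1) (hKB : lam ^ 2 / β ^ 2 * (C - B) ≠ 1)
    (ω z : Fin 3 → ℝ)
    (hω : ω = lam • z + μ • e3)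
    (heq : -lam • crossProduct e3 (Iv A B C ω)
        + crossProduct e3 ((lam * C) • ω - β ^ 2 • z) = 0) :
    (1 - lam ^ 2 / β ^ 2 * (C - B)) * z 1 = 0 ∧
    (lam ^ 2 / β ^ 2 * (C - A) - 1) * z 0 = 0 ∧
    z 0 = 0 ∧ z 1 = 0 ∧ z = z 2 • e3 ∧ ω = (lam * z 2 + μ) • e3 := by
  rw [← map_smul, ← map_add, ← add_sub_assoc, crossProduct_e3_eq_zero_iff, hω,
    torque_apply_zero, torque_apply_one] at heq
  have hβ2 : β ^ 2 ≠ 0 := by positivity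
  have hKA' : (lam ^ 2 / β ^ 2 * (C - A) - 1) * z 0 = 0 := by
    rw [← mul_div_right_comm]
    exact div_sub_one_mul_eq_zero hβ2 heq.1
  have hKB' : (1 - lam ^ 2 / β ^ 2 * (C - B)) * z 1 = 0 := by
    rw [← neg_sub, neg_mul, neg_eq_zero, ← mul_div_right_comm]
    exact div_sub_one_mul_eq_zero hβ2 heq.2
  have hz0 : z 0 = 0 := (mul_eq_zero.mp hKA').resolve_left (sub_ne_zero.mpr hKA)
  have hz1 : z 1 = 0 := (mul_eq_zero.mp hKB').resolve_left (sub_ne_zero.mpr hKB.symm)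
  have hz : z = z 2 • e3 := eq_smul_e3_of_apply_zero_of_apply_one hz0 hz1
  refine ⟨hKB', hKA', hz0, hz1, hz, ?_⟩
  rw [hω, hz, smul_smul, ← add_smul]
  simp [e3]

/-- Core computation of the null-space characterization: if `ω = λz + μe₃` and
`−λ e₃ × (Iω) + e₃ × (λCω − β²z) = 0`, then `(1−K_B)z₂ = 0` and `(K_A−1)z₁ = 0`, so
(for `K_A, K_B ≠ 1`) `z₁ = z₂ = 0`, `z = z₃e₃` and `ω = (λz₃+μ)e₃`. -/
theorem stmt18 (lam β A B C μ : ℝ) (hlam : lam ≠ 0) (hβ : 0 < β)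
    (hA : 0 < A) (hB : 0 < B) (hC : 0 < C)
    (hKA : lam ^ 2 / β ^ 2 * (C - A) ≠ 1) (hKB : lam ^ 2 / β ^ 2 * (C - B) ≠ 1)
    (ω z : Fin 3 → ℝ)
    (hω : ω = lam • z + μ • e3)
    (heq : -lam • crossProduct e3 (Iv A B C ω)
        + crossProduct e3 ((lam * C) • ω - β ^ 2 • z) = 0) :
    (1 - lam ^ 2 / β ^ 2 * (C - B)) * z 1 = 0 ∧
    (lam ^ 2 / β ^ 2 * (C - A) - 1) * z 0 = 0 ∧
    z 0 = 0 ∧ z 1 = 0 ∧ z = z 2 • e3 ∧ ω = (lam * z 2 + μ) • e3 :=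
  stmt18_general lam β A B C μ hβ hKA hKB ω z hω heq
end
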